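/- arXiv:2406.12061 — 4 statements merged into one kernel-verified Lean document; each statement's English description precedes it below -/
import Mathlib

section
/- Let H be a complex Hilbert space and let A₁, A₂ be bounded linear operators on H. If A₂ is normal and the commutator [A₁, A₂] = A₁A₂ − A₂A₁ commutes with A₂, then [A₁, A₂] = 0. -/
/-!
By Fuglede's theorem `D = [A₁, A₂]`, which commutes with the normal operator `A₂`, also commutes
with `A₂⋆`, so `D⋆` commutes with `A₂`. Then `B = D⋆ A₁` satisfies `[A₂, B] = -D⋆D`, which
commutes with `A₂`. For such `B` (Kleinecke–Shirokov) `ad(A₂)ⁿ (Bⁿ) = n! [A₂, B]ⁿ`, whence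
`n! ‖(D⋆D)ⁿ‖ ≤ cⁿ` with `c = 2‖A₂‖‖B‖`. As `D⋆D` is self-adjoint, `‖(D⋆D)ⁿ‖ = ‖D⋆D‖ⁿ` for
`n = 2ᵏ`, so `‖D⋆D‖ⁿ ≤ cⁿ / n! → 0` along these `n`, which forces `D⋆D = 0`, i.e. `D = 0`.
-/

open scoped Nat

attribute [local instance] LieRing.ofAssociativeRing

section Ring

variable {R : Type*} [Ring R]

theorem lie_mul_eq_lie_mul_add_mul_lie (N B X : R) : ⁅N, B * X⁆ = ⁅N, B⁆ * X + B * ⁅N, X⁆ := by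
  simp only [Ring.lie_def]
  noncomm_ring

theorem iterate_lie_succ_mul_of_lie_lie_eq_zero {N B : R} (h : ⁅N, ⁅N, B⁆⁆ = 0) (k : ℕ) (X : R) :
    (⁅N, ·⁆)^[k + 1] (B * X) =
      B * (⁅N, ·⁆)^[k + 1] X + (k + 1) • (⁅N, B⁆ * (⁅N, ·⁆)^[k] X) := by
  induction k with
  | zero => simp [lie_mul_eq_lie_mul_add_mul_lie, add_comm]
  | succ k ih =>
    rw [Function.iterate_succ_apply', ih, lie_add, lie_nsmul, lie_mul_eq_lie_mul_add_mul_lie,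
      lie_mul_eq_lie_mul_add_mul_lie, h, zero_mul, zero_add,
      ← Function.iterate_succ_apply' (⁅N, ·⁆) k X,
      ← Function.iterate_succ_apply' (⁅N, ·⁆) (k + 1) X]
    module

theorem iterate_lie_pow_eq_factorial_smul {N B : R} (h : ⁅N, ⁅N, B⁆⁆ = 0) (n : ℕ) :
    (⁅N, ·⁆)^[n] (B ^ n) = n ! • ⁅N, B⁆ ^ n := by
  induction n with
  | zero => simp
  | succ n ih =>
    have hcomm : ⁅N, ⁅N, B⁆ ^ n⁆ = 0 := ((commute_iff_lie_eq.mpr h).pow_right n).lie_eq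
    rw [pow_succ', iterate_lie_succ_mul_of_lie_lie_eq_zero h, Function.iterate_succ_apply', ih,
      lie_nsmul, hcomm, nsmul_zero, mul_zero, zero_add, mul_smul_comm, smul_smul, ← pow_succ',
      Nat.factorial_succ]

end Ring

section NormedRing

variable {R : Type*} [NormedRing R]

theorem norm_lie_le (x y : R) : ‖⁅x, y⁆‖ ≤ 2 * ‖x‖ * ‖y‖ :=
  calc ‖x * y - y * x‖ ≤ ‖x‖ * ‖y‖ + ‖y‖ * ‖x‖ :=
        (norm_sub_le _ _).trans (add_le_add (norm_mul_le _ _) (norm_mul_le _ _))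
    _ = 2 * ‖x‖ * ‖y‖ := by ring

theorem norm_iterate_lie_le (N X : R) (n : ℕ) : ‖(⁅N, ·⁆)^[n] X‖ ≤ (2 * ‖N‖) ^ n * ‖X‖ := by
  induction n with
  | zero => simp
  | succ n ih =>
    rw [Function.iterate_succ_apply', pow_succ', mul_assoc]
    exact (norm_lie_le _ _).trans (by gcongr)

theorem factorial_mul_norm_lie_pow_le [NormedSpace ℝ R] {N B : R} (h : ⁅N, ⁅N, B⁆⁆ = 0) {n : ℕ}
    (hn : 0 < n) : n ! * ‖⁅N, B⁆ ^ n‖ ≤ (2 * ‖N‖ * ‖B‖) ^ n :=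
  calc n ! * ‖⁅N, B⁆ ^ n‖ = ‖(⁅N, ·⁆)^[n] (B ^ n)‖ := by
        rw [iterate_lie_pow_eq_factorial_smul h, RCLike.norm_nsmul ℝ, nsmul_eq_mul]
    _ ≤ (2 * ‖N‖) ^ n * ‖B‖ ^ n :=
        (norm_iterate_lie_le N _ n).trans (by gcongr; exact norm_pow_le' B hn)
    _ = (2 * ‖N‖ * ‖B‖) ^ n := (mul_pow _ _ _).symm

end NormedRing

theorem IsSelfAdjoint.eq_zero_of_factorial_mul_norm_pow_le {E : Type*} [NormedRing E] [StarRing E]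
    [CStarRing E] {P : E} (hP : IsSelfAdjoint P) (c : ℝ)
    (h : ∀ n, 0 < n → n ! * ‖P ^ n‖ ≤ c ^ n) : P = 0 := by
  by_contra hP0
  have hPpos : 0 < ‖P‖ := norm_pos_iff.mpr hP0
  obtain ⟨K, hK⟩ := Filter.eventually_atTop.mp
    ((FloorSemiring.tendsto_pow_div_factorial_atTop (c / ‖P‖)).eventually_lt_const one_pos)
  have hnorm : ‖P ^ 2 ^ K‖ = ‖P‖ ^ 2 ^ K := congrArg NNReal.toReal (hP.nnnorm_pow_two_pow K)
  refine (hK (2 ^ K) Nat.lt_two_pow_self.le).not_ge ?_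
  rw [div_pow, div_div, one_le_div (by positivity), mul_comm, ← hnorm]
  exact h _ (by positivity)

/-- If `A₂ ∈ B(H)` is normal and the commutator `[A₁, A₂]` commutes
with `A₂`, then `[A₁, A₂] = 0`. -/
theorem commutator_eq_zero_of_normal_of_commutes
    {H : Type*} [NormedAddCommGroup H] [InnerProductSpace ℂ H] [CompleteSpace H]
    (A₁ A₂ : H →L[ℂ] H) (h₂ : IsStarNormal A₂)
    (hcomm : (A₁ * A₂ - A₂ * A₁) * A₂ = A₂ * (A₁ * A₂ - A₂ * A₁)) :
    A₁ * A₂ - A₂ * A₁ = 0 := by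
  change ⁅A₁, A₂⁆ = 0
  set D := ⁅A₁, A₂⁆
  have hD : Commute A₂ D := Commute.symm hcomm
  have hDstar : Commute A₂ (star D) := by
    simpa only [star_star] using (h₂.commute_star_right hD.symm).star_star.symm
  have hlie : ⁅A₂, star D * A₁⁆ = -(star D * D) := by
    rw [lie_mul_eq_lie_mul_add_mul_lie, hDstar.lie_eq, zero_mul, zero_add, ← lie_skew, mul_neg]
  have hlie_lie : ⁅A₂, ⁅A₂, star D * A₁⁆⁆ = 0 := by
    rw [hlie, lie_neg, lie_mul_eq_lie_mul_add_mul_lie, hD.lie_eq, hDstar.lie_eq, zero_mul,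
      mul_zero, add_zero, neg_zero]
  have hP : -(star D * D) = 0 :=
    (IsSelfAdjoint.star_mul_self D).neg.eq_zero_of_factorial_mul_norm_pow_le _ fun _ hn =>
      hlie ▸ factorial_mul_norm_lie_pow_le hlie_lie hn
  exact (CStarRing.star_mul_self_eq_zero_iff D).mp (neg_eq_zero.mp hP)
end

section
/- Let H be a complex Hilbert space and let A₁, A₂ : ℂ² → B(H) be holomorphic with A₁(z), A₂(z) normal for every z, satisfying i(∂₂A₁(z) − ∂₁A₂(z)) = [A₁(z) − i·A₁(z)*, A₂(z)] for all z ∈ ℂ². Then: (i) [A₁(z) − A₁(w), A₂(w)] = 0 and [A₁(z)* − A₁(w)*, A₂(w)] = 0 for all z, w ∈ ℂ²; (ii) for all z₁, w₁, z₂ ∈ ℂ and all u ∈ ℂ², the operator A₂(z₁, z₂) − A₂(w₁, z₂) commutes with A₁(u) and with A₂(u). -/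
/-!
Polarization: a holomorphic function of `(z, w) ∈ ℂ² × ℂ²` vanishing on the totally real set
`w = z̄` vanishes identically. Since `z ↦ A(z̄)*` is holomorphic, any identity holding for
`A(z)` and `A(z)*` therefore holds for `A(z)` and `A(u)*` with `u` arbitrary. Applied to
normality and to the field equation, and combined with Fuglede's theorem, this makes the values of
`A₂`, the differences of values of `A₁` and their adjoints commute; so do the derivatives, which
are limits of such differences. Hence `K = ∂₁A₂ − ∂₂A₁` is normal, commutes with `A₂(z)`, and by
the field equation is a commutator `[A₂(z), P]`; the Kleinecke–Shirokov argument
(`‖Kⁿ‖ n! ≤ (2‖A₂(z)‖‖P‖)ⁿ`, together with `‖K^(2^m)‖ = ‖K‖^(2^m)` for normal `K`) forces `K = 0`.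
Then `∂₁A₂ = ∂₂A₁` commutes with every `A₁(u)`, which integrates to (ii).
-/

/-- The complex partial derivative `∂₁` of a function on `ℂ²`. -/
noncomputable def pderiv1 {E : Type*} [NormedAddCommGroup E] [NormedSpace ℂ E]
    (f : ℂ × ℂ → E) (z : ℂ × ℂ) : E :=
  fderiv ℂ f z (1, 0)

/-- The complex partial derivative `∂₂` of a function on `ℂ²`. -/
noncomputable def pderiv2 {E : Type*} [NormedAddCommGroup E] [NormedSpace ℂ E]
    (f : ℂ × ℂ → E) (z : ℂ × ℂ) : E :=
  fderiv ℂ f z (0, 1)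

open Complex ComplexConjugate Filter Topology

section IdentityTheorem

variable {E : Type*} [NormedAddCommGroup E] [NormedSpace ℂ E] [CompleteSpace E]

theorem Differentiable.eq_zero_of_forall_ofReal {f : ℂ → E} (hf : Differentiable ℂ f)
    (h : ∀ x : ℝ, f x = 0) : f = 0 := by
  have hreal : Tendsto ((↑) : ℝ → ℂ) (𝓝[≠] 0) (𝓝[≠] 0) := by
    have hmaps : Set.MapsTo ((↑) : ℝ → ℂ) {0}ᶜ {0}ᶜ := fun x hx => ofReal_ne_zero.mpr hx
    have := continuous_ofReal.continuousWithinAt.tendsto_nhdsWithin hmaps (x := 0)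
    rwa [ofReal_zero] at this
  funext z
  exact (hf.differentiableOn.analyticOnNhd isOpen_univ)
    |>.eqOn_zero_of_preconnected_of_frequently_eq_zero isPreconnected_univ (Set.mem_univ 0)
      (hreal.frequently (Frequently.of_forall h)) (Set.mem_univ z)

theorem Differentiable.eq_zero_of_forall_ofReal_prod {g : ℂ × ℂ → E} (hg : Differentiable ℂ g)
    (h : ∀ x y : ℝ, g (x, y) = 0) : g = 0 := by
  have hslice (y : ℝ) : (fun x : ℂ => g (x, y)) = 0 :=
    (hg.comp (differentiable_id.prodMk (differentiable_const _))).eq_zero_of_forall_ofReal (h · y)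
  funext ⟨x, y⟩
  have hg' : Differentiable ℂ fun y : ℂ => g (x, y) :=
    hg.comp ((differentiable_const x).prodMk differentiable_id)
  exact congrFun (hg'.eq_zero_of_forall_ofReal fun y => congrFun (hslice y) x) y

theorem Differentiable.eq_zero_of_forall_conj {g : ℂ × ℂ → E} (hg : Differentiable ℂ g)
    (h : ∀ z, g (z, conj z) = 0) : g = 0 := by
  set φ : ℂ × ℂ → ℂ × ℂ := fun p => (p.1 + I * p.2, p.1 - I * p.2)
  have hφ : g ∘ φ = 0 := by
    refine (hg.comp (by fun_prop)).eq_zero_of_forall_ofReal_prod fun x y => ?_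
    simpa [φ, sub_eq_add_neg] using h (x + I * y)
  funext ⟨a, b⟩
  have hinv : φ ((a + b) / 2, (a - b) / (2 * I)) = (a, b) := by
    simp only [φ, Prod.mk.injEq]
    constructor <;> field_simp <;> ring
  simpa [hinv] using congrFun hφ ((a + b) / 2, (a - b) / (2 * I))

theorem Differentiable.eq_zero_of_forall_star {g : (ℂ × ℂ) × (ℂ × ℂ) → E}
    (hg : Differentiable ℂ g) (h : ∀ z, g (z, star z) = 0) : g = 0 := by
  have hslice (z₂ : ℂ) : (fun q : ℂ × ℂ => g ((q.1, z₂), (q.2, conj z₂))) = 0 :=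
    (hg.comp (by fun_prop)).eq_zero_of_forall_conj fun z => h (z, z₂)
  funext ⟨⟨a, z₂⟩, ⟨b, w₂⟩⟩
  have hg' : Differentiable ℂ fun q : ℂ × ℂ => g ((a, q.1), (b, q.2)) := hg.comp (by fun_prop)
  exact congrFun (hg'.eq_zero_of_forall_conj fun z => congrFun (hslice z) (a, b)) (z₂, w₂)

end IdentityTheorem

theorem apply_star_eq_zero_of_apply_star_self_eq_zero
    {E : Type*} [NormedAddCommGroup E] [NormedSpace ℂ E] [CompleteSpace E]
    {F : Type*} [NormedAddCommGroup F] [NormedSpace ℂ F] [StarAddMonoid F] [StarModule ℂ F]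
    [ContinuousStar F] {A : ℂ × ℂ → F} (hA : Differentiable ℂ A)
    {Φ : (ℂ × ℂ) × F → E} (hΦ : Differentiable ℂ Φ) (h : ∀ z, Φ (z, star (A z)) = 0)
    (z u : ℂ × ℂ) : Φ (z, star (A u)) = 0 := by
  have hA' : Differentiable ℂ (star ∘ A ∘ star) := fun w => by
    simpa using (hA (star w)).star_star
  have hzero := (hΦ.comp (differentiable_fst.prodMk (hA'.comp differentiable_snd)))
    |>.eq_zero_of_forall_star fun w => by simpa using h w
  simpa using congrFun hzero (z, star u)

theorem HasFDerivAt.apply_mem_of_forall_sub_mem {𝕜 E F : Type*} [RCLike 𝕜]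
    [NormedAddCommGroup E] [NormedSpace 𝕜 E] [NormedAddCommGroup F] [NormedSpace 𝕜 F]
    {S : Type*} [SetLike S F] [AddSubgroupClass S F] {s : S} (hs : IsClosed (s : Set F))
    {f : E → F} {f' : E →L[𝕜] F} {z : E} (hf : HasFDerivAt f f' z) (h : ∀ u, f u - f z ∈ s)
    (v : E) : f' v ∈ s := by
  have hn : Tendsto (fun n : ℕ => ‖(n : 𝕜)‖) atTop atTop := by
    simpa using tendsto_natCast_atTop_atTop
  refine hs.mem_of_tendsto (hf.lim v hn) (Eventually.of_forall fun n => ?_)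
  rw [Nat.cast_smul_eq_nsmul]
  exact nsmul_mem (h _) n

section Commute

variable {𝔸 : Type*} [NormedRing 𝔸] [NormedAlgebra ℂ 𝔸]

theorem commute_fderiv_apply_of_forall_commute {E : Type*} [NormedAddCommGroup E]
    [NormedSpace ℂ E] {f : E → 𝔸} {z : E} (hf : DifferentiableAt ℂ f z) {b : 𝔸}
    (h : ∀ u, Commute (f u) b) (v : E) : Commute (fderiv ℂ f z v) b := by
  have hmem : fderiv ℂ f z v ∈ Subring.centralizer {b} :=
    hf.hasFDerivAt.apply_mem_of_forall_sub_mem (Set.isClosed_centralizer _)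
      (fun u => Subring.mem_centralizer_iff.mpr fun _ hm => by
        rw [Set.mem_singleton_iff.mp hm]
        exact ((h u).sub_left (h z)).eq.symm) v
  exact (Subring.mem_centralizer_iff.mp hmem b rfl).symm

theorem commute_sub_of_forall_commute_pderiv1 {f : ℂ × ℂ → 𝔸} (hf : Differentiable ℂ f) {b : 𝔸}
    (h : ∀ z, Commute (pderiv1 f z) b) (z₁ w₁ z₂ : ℂ) : Commute (f (z₁, z₂) - f (w₁, z₂)) b := by
  have hderiv (t : ℂ) : HasDerivAt (fun t => f (t, z₂) * b - b * f (t, z₂)) 0 t := by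
    have hslice : HasDerivAt (fun t => f (t, z₂)) (pderiv1 f (t, z₂)) t :=
      (hf (t, z₂)).hasFDerivAt.comp_hasDerivAt t ((hasDerivAt_id t).prodMk (hasDerivAt_const t z₂))
    simpa [(h (t, z₂)).eq] using (hslice.mul_const b).fun_sub (hslice.const_mul b)
  have hconst := is_const_of_deriv_eq_zero (fun t => (hderiv t).differentiableAt)
    (fun t => (hderiv t).deriv) z₁ w₁
  rw [commute_iff_eq, sub_mul, mul_sub, sub_eq_sub_iff_sub_eq_sub, hconst]

end Commute

theorem IsStarNormal.commute_of_commute_star {A : Type*} [NonUnitalCStarAlgebra A] {a x : A}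
    (ha : IsStarNormal a) (h : Commute x (star a)) : Commute x a := by
  simpa using ha.star.commute_star_right h

theorem exists_isClosed_starSubalgebra_commute {𝔸 : Type*} [CStarAlgebra 𝔸] {T : Set 𝔸}
    (hT : ∀ x ∈ T, ∀ y ∈ T, Commute x (star y)) :
    ∃ B : StarSubalgebra ℂ 𝔸, IsClosed (B : Set 𝔸) ∧ T ⊆ B ∧ ∀ x ∈ B, ∀ y ∈ B, Commute x y := by
  have hcomm : ∀ x ∈ T, ∀ y ∈ T, Commute x y := fun x hx y hy =>
    IsStarNormal.commute_of_commute_star ⟨(hT y hy y hy).symm⟩ (hT x hx y hy)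
  have hcomm_union : ∀ x ∈ T ∪ star T, ∀ y ∈ T ∪ star T, x * y = y * x := by
    rintro x (hx | hx) y (hy | hy)
    · exact (hcomm x hx y hy).eq
    · simpa using (hT x hx _ hy).eq
    · simpa using (hT y hy _ hx).symm.eq
    · simpa using (hcomm _ hy _ hx).star_star.symm.eq
  refine ⟨StarSubalgebra.centralizer ℂ (StarSubalgebra.centralizer ℂ T), ?_, ?_, ?_⟩
  all_goals simp only [← SetLike.mem_coe, StarSubalgebra.coe_centralizer_centralizer]
  · exact Set.isClosed_centralizer _
  · exact Set.subset_union_left.trans Set.subset_centralizer_centralizer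
  · exact fun x hx y hy => Set.centralizer_centralizer_comm_of_comm hcomm_union x hx y hy

section KleineckeShirokov

variable {R : Type*} [Ring R]

def commutatorWith (N : R) : R →+ R := AddMonoidHom.mulLeft N - AddMonoidHom.mulRight N

theorem commutatorWith_apply (N x : R) : commutatorWith N x = N * x - x * N := rfl

theorem commutatorWith_mul (N x y : R) :
    commutatorWith N (x * y) = commutatorWith N x * y + x * commutatorWith N y := by
  simp only [commutatorWith_apply]
  noncomm_ring

theorem iterate_succ_commutatorWith_mul {N P : R} (hP : commutatorWith N (commutatorWith N P) = 0)
    (m : ℕ) (y : R) :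
    (commutatorWith N)^[m + 1] (P * y) = P * (commutatorWith N)^[m + 1] y +
      (m + 1) • (commutatorWith N P * (commutatorWith N)^[m] y) := by
  induction m with
  | zero => simp [commutatorWith_mul, add_comm]
  | succ m ih =>
    rw [Function.iterate_succ_apply', ih, map_add, map_nsmul, commutatorWith_mul,
      commutatorWith_mul, hP, zero_mul, zero_add, ← Function.iterate_succ_apply' (commutatorWith N),
      ← Function.iterate_succ_apply' (commutatorWith N), succ_nsmul _ (m + 1)]
    abel

theorem iterate_commutatorWith_pow {N P : R} (hP : commutatorWith N (commutatorWith N P) = 0)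
    (n : ℕ) : (commutatorWith N)^[n] (P ^ n) = n.factorial • commutatorWith N P ^ n ∧
      (commutatorWith N)^[n + 1] (P ^ n) = 0 := by
  induction n with
  | zero => simp [commutatorWith_apply]
  | succ n ih =>
    constructor
    · rw [pow_succ', iterate_succ_commutatorWith_mul hP, ih.2, ih.1, mul_zero, zero_add,
        mul_smul_comm, smul_smul, ← pow_succ', Nat.factorial_succ]
    · rw [pow_succ', iterate_succ_commutatorWith_mul hP, Function.iterate_succ_apply', ih.2,
        map_zero, mul_zero, zero_add, mul_zero, smul_zero]

theorem norm_iterate_commutatorWith_le {R : Type*} [NormedRing R] (N x : R) (n : ℕ) :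
    ‖(commutatorWith N)^[n] x‖ ≤ (2 * ‖N‖) ^ n * ‖x‖ := by
  induction n with
  | zero => simp
  | succ n ih =>
    rw [Function.iterate_succ_apply', commutatorWith_apply]
    calc ‖N * _ - _ * N‖ ≤ ‖N‖ * ‖(commutatorWith N)^[n] x‖ + ‖(commutatorWith N)^[n] x‖ * ‖N‖ :=
          (norm_sub_le _ _).trans (add_le_add (norm_mul_le _ _) (norm_mul_le _ _))
      _ = 2 * ‖N‖ * ‖(commutatorWith N)^[n] x‖ := by ring
      _ ≤ 2 * ‖N‖ * ((2 * ‖N‖) ^ n * ‖x‖) := by gcongr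
      _ = (2 * ‖N‖) ^ (n + 1) * ‖x‖ := by ring

theorem IsStarNormal.norm_pow_two_pow {R : Type*} [NormedRing R] [StarRing R] [CStarRing R]
    {b : R} (hb : IsStarNormal b) (m : ℕ) : ‖b ^ 2 ^ m‖ = ‖b‖ ^ 2 ^ m := by
  refine (mul_self_inj (norm_nonneg _) (by positivity)).mp ?_
  rw [← CStarRing.norm_star_mul_self, star_pow, ← hb.star_comm_self.mul_pow,
    (IsSelfAdjoint.star_mul_self b).norm_pow_two_pow, CStarRing.norm_star_mul_self, mul_pow]

theorem eq_zero_of_forall_pow_two_pow_mul_factorial_le {x M : ℝ} (hx : 0 ≤ x)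
    (h : ∀ m, x ^ 2 ^ m * (2 ^ m).factorial ≤ M ^ 2 ^ m) : x = 0 := by
  by_contra hne
  have hx' : 0 < x := hx.lt_of_ne' hne
  obtain ⟨m, hm⟩ := eventually_atTop.mp
    ((FloorSemiring.tendsto_pow_div_factorial_atTop (M / x)).eventually_lt_const one_pos)
  have hlt := hm (2 ^ m) m.lt_two_pow_self.le
  rw [div_pow, div_div, div_lt_one (by positivity)] at hlt
  exact (h m).not_gt hlt

theorem commutatorWith_eq_zero_of_isStarNormal {𝔸 : Type*} [CStarAlgebra 𝔸] {N P : 𝔸}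
    (hn : IsStarNormal (commutatorWith N P)) (hc : Commute N (commutatorWith N P)) :
    commutatorWith N P = 0 := by
  set C := commutatorWith N P
  have hP : commutatorWith N C = 0 := by rw [commutatorWith_apply, hc.eq, sub_self]
  refine norm_eq_zero.mp (eq_zero_of_forall_pow_two_pow_mul_factorial_le (M := 2 * ‖N‖ * ‖P‖)
    (norm_nonneg C) fun m => ?_)
  calc ‖C‖ ^ 2 ^ m * (2 ^ m).factorial = ‖(2 ^ m).factorial • C ^ 2 ^ m‖ := by
        rw [← Nat.cast_smul_eq_nsmul ℝ, norm_smul, hn.norm_pow_two_pow, Real.norm_natCast, mul_comm]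
    _ = ‖(commutatorWith N)^[2 ^ m] (P ^ 2 ^ m)‖ := by rw [(iterate_commutatorWith_pow hP _).1]
    _ ≤ (2 * ‖N‖) ^ 2 ^ m * ‖P‖ ^ 2 ^ m :=
        (norm_iterate_commutatorWith_le _ _ _).trans
          (by gcongr; exact norm_pow_le' P (by positivity))
    _ = (2 * ‖N‖ * ‖P‖) ^ 2 ^ m := by ring

end KleineckeShirokov

section Polarization

variable {𝔸 : Type*} [NormedRing 𝔸] [NormedAlgebra ℂ 𝔸] [CompleteSpace 𝔸] [StarRing 𝔸]
  [StarModule ℂ 𝔸] [ContinuousStar 𝔸] {A A₁ A₂ : ℂ × ℂ → 𝔸}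

theorem commute_star_of_forall_isStarNormal (hA : Differentiable ℂ A)
    (hn : ∀ z, IsStarNormal (A z)) (w u : ℂ × ℂ) : Commute (A w) (star (A u)) :=
  sub_eq_zero.mp <| apply_star_eq_zero_of_apply_star_self_eq_zero hA
    (Φ := fun p => A p.1 * p.2 - p.2 * A p.1) (by fun_prop)
    (fun z => sub_eq_zero.mpr (hn z).star_comm_self.symm.eq) w u

theorem commute_star_sub_of_eq_commutator (hA₁ : Differentiable ℂ A₁) (hA₂ : Differentiable ℂ A₂)
    {D : ℂ × ℂ → 𝔸} (hD : Differentiable ℂ D) {c : ℂ} (hc : c ≠ 0)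
    (heq : ∀ z, D z = (A₁ z - c • star (A₁ z)) * A₂ z - A₂ z * (A₁ z - c • star (A₁ z)))
    (u u' z : ℂ × ℂ) : Commute (star (A₁ u) - star (A₁ u')) (A₂ z) := by
  set Φ : (ℂ × ℂ) × 𝔸 → 𝔸 := fun p =>
    D p.1 - ((A₁ p.1 - c • p.2) * A₂ p.1 - A₂ p.1 * (A₁ p.1 - c • p.2))
  have hΦ (v : ℂ × ℂ) : Φ (z, star (A₁ v)) = 0 :=
    apply_star_eq_zero_of_apply_star_self_eq_zero hA₁ (Φ := Φ) (by fun_prop)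
      (fun z => sub_eq_zero.mpr (heq z)) z v
  have hdiff : c • ((star (A₁ u) - star (A₁ u')) * A₂ z - A₂ z * (star (A₁ u) - star (A₁ u'))) =
      Φ (z, star (A₁ u)) - Φ (z, star (A₁ u')) := by
    simp only [Φ, smul_sub, sub_mul, mul_sub, smul_mul_assoc, mul_smul_comm]
    abel
  rw [hΦ, hΦ, sub_self, smul_eq_zero, sub_eq_zero] at hdiff
  exact hdiff.resolve_left hc

end Polarization

section NormalFamilies

variable {𝔸 : Type*} [CStarAlgebra 𝔸] {A A₁ A₂ : ℂ × ℂ → 𝔸}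

theorem commute_of_forall_isStarNormal (hA : Differentiable ℂ A) (hn : ∀ z, IsStarNormal (A z))
    (w u : ℂ × ℂ) : Commute (A w) (A u) :=
  (hn u).commute_of_commute_star (commute_star_of_forall_isStarNormal hA hn w u)

theorem pderiv1_eq_pderiv2 (hA₁ : Differentiable ℂ A₁) (hA₂ : Differentiable ℂ A₂)
    (hn₁ : ∀ z, IsStarNormal (A₁ z)) (hn₂ : ∀ z, IsStarNormal (A₂ z))
    (hA₁₂ : ∀ u u' z, Commute (star (A₁ u) - star (A₁ u')) (A₂ z)) {c : ℂ} (hc : c ≠ 0)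
    (heq : ∀ z, c • (pderiv2 A₁ z - pderiv1 A₂ z) =
      (A₁ z - c • star (A₁ z)) * A₂ z - A₂ z * (A₁ z - c • star (A₁ z)))
    (z : ℂ × ℂ) : pderiv1 A₂ z = pderiv2 A₁ z := by
  obtain ⟨B, hBc, hTB, hB⟩ := exists_isClosed_starSubalgebra_commute
      (T := Set.range A₂ ∪ Set.range fun p : (ℂ × ℂ) × (ℂ × ℂ) => A₁ p.1 - A₁ p.2) <| by
    have h₁ := commute_star_of_forall_isStarNormal hA₁ hn₁
    rintro _ (⟨w, rfl⟩ | ⟨⟨u, u'⟩, rfl⟩) _ (⟨w', rfl⟩ | ⟨⟨v, v'⟩, rfl⟩)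
    · exact commute_star_of_forall_isStarNormal hA₂ hn₂ w w'
    · simpa [star_sub] using (hA₁₂ v v' w).symm
    · simpa using (hA₁₂ u u' w').star_star
    · rw [star_sub]
      exact ((h₁ u v).sub_left (h₁ u' v)).sub_right ((h₁ u v').sub_left (h₁ u' v'))
  have hA₂B (w : ℂ × ℂ) : A₂ w ∈ B := hTB (Or.inl ⟨w, rfl⟩)
  have hderivB {f : ℂ × ℂ → 𝔸} (hf : Differentiable ℂ f) (hfB : ∀ u u', f u - f u' ∈ B)
      (v : ℂ × ℂ) : fderiv ℂ f z v ∈ B :=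
    (hf z).hasFDerivAt.apply_mem_of_forall_sub_mem hBc (hfB · z) v
  set K := pderiv1 A₂ z - pderiv2 A₁ z
  have hKB : K ∈ B := sub_mem (hderivB hA₂ (fun u u' => sub_mem (hA₂B u) (hA₂B u')) _)
    (hderivB hA₁ (fun u u' => hTB (Or.inr ⟨(u, u'), rfl⟩)) _)
  have hK : K = commutatorWith (A₂ z) (c⁻¹ • (A₁ z - c • star (A₁ z))) := by
    refine smul_right_injective 𝔸 hc (?_ : c • K = c • _)
    rw [show K = -(pderiv2 A₁ z - pderiv1 A₂ z) from (neg_sub _ _).symm, smul_neg, heq z, neg_sub,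
      commutatorWith_apply, mul_smul_comm, smul_mul_assoc, ← smul_sub, smul_smul,
      mul_inv_cancel₀ hc, one_smul]
  have hK0 := commutatorWith_eq_zero_of_isStarNormal (hK ▸ ⟨hB _ (star_mem hKB) _ hKB⟩)
    (hK ▸ hB _ (hA₂B z) _ hKB)
  exact sub_eq_zero.mp (hK.trans hK0)

end NormalFamilies

/-- In the Minkowski SD situation:
(i) `[A₁(z) − A₁(w), A₂(w)] = 0` and `[A₁(z)* − A₁(w)*, A₂(w)] = 0` for all `z, w`;
(ii) `A₂(z₁, z₂) − A₂(w₁, z₂)` commutes with `A₁(u)` and `A₂(u)`. -/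
theorem minkowski_sd_differences_commute
    {H : Type*} [NormedAddCommGroup H] [InnerProductSpace ℂ H] [CompleteSpace H]
    (A₁ A₂ : ℂ × ℂ → (H →L[ℂ] H))
    (h₁ : AnalyticOnNhd ℂ A₁ Set.univ) (h₂ : AnalyticOnNhd ℂ A₂ Set.univ)
    (hn₁ : ∀ z, IsStarNormal (A₁ z)) (hn₂ : ∀ z, IsStarNormal (A₂ z))
    (heq : ∀ z, Complex.I • (pderiv2 A₁ z - pderiv1 A₂ z) =
      (A₁ z - Complex.I • star (A₁ z)) * A₂ z -
        A₂ z * (A₁ z - Complex.I • star (A₁ z))) :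
    (∀ z w : ℂ × ℂ,
      Commute (A₁ z - A₁ w) (A₂ w) ∧
      Commute (star (A₁ z) - star (A₁ w)) (A₂ w)) ∧
    (∀ (z₁ w₁ z₂ : ℂ) (u : ℂ × ℂ),
      Commute (A₂ (z₁, z₂) - A₂ (w₁, z₂)) (A₁ u) ∧
      Commute (A₂ (z₁, z₂) - A₂ (w₁, z₂)) (A₂ u)) := by
  have hd₁ : Differentiable ℂ A₁ := fun z => (h₁ z trivial).differentiableAt
  have hd₂ : Differentiable ℂ A₂ := fun z => (h₂ z trivial).differentiableAt
  have hD : Differentiable ℂ fun z => I • (pderiv2 A₁ z - pderiv1 A₂ z) := fun z =>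
    (((h₁.fderiv z trivial).differentiableAt.clm_apply (differentiableAt_const _)).sub
      ((h₂.fderiv z trivial).differentiableAt.clm_apply (differentiableAt_const _))).const_smul I
  have hA₁₂ := commute_star_sub_of_eq_commutator hd₁ hd₂ hD I_ne_zero heq
  have hK := pderiv1_eq_pderiv2 hd₁ hd₂ hn₁ hn₂ hA₁₂ I_ne_zero heq
  refine ⟨fun z w => ⟨?_, hA₁₂ z w w⟩, fun z₁ w₁ z₂ u => ⟨?_, ?_⟩⟩
  · exact (hn₂ w).commute_of_commute_star (by simpa using (hA₁₂ z w w).star_star)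
  · refine commute_sub_of_forall_commute_pderiv1 hd₂ (fun z => ?_) z₁ w₁ z₂
    rw [hK]
    exact commute_fderiv_apply_of_forall_commute (hd₁ z)
      (fun v => commute_of_forall_isStarNormal hd₁ hn₁ v u) _
  · have hA₂ := commute_of_forall_isStarNormal hd₂ hn₂
    exact (hA₂ _ u).sub_left (hA₂ _ u)
end

section
/- Let h : ℂ² → ℂ and H : ℂ² → ℂ be holomorphic with ∂₁H = ∂₂h. Let U = (1/√2)·[[1, 1], [i, −i]], A₁(z) = [[h(z), 0], [0, h(z) + 1 − i]], and A₂(z) = U* · [[H(z) + cos z₂, 0], [0, H(z) + i·sin z₂]] · U. Then: (i) A₁(z) and A₂(z) are normal for every z; (ii) [A₁(z)* − i·A₁(z), A₂(z)] = 0 for every z; (iii) ∂₁A₂(z) = ∂₂A₁(z) for every z (so the self-duality condition [A₁* − iA₁, A₂] = i(∂₁A₂ − ∂₂A₁) holds); and (iv) [A₂(z), A₁(z)*] = (1/√2)·e^{−i(z₂ − π/4)}·[[0, 1], [−1, 0]], which is nonzero for every z ∈ ℂ². -/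
attribute [local instance] Matrix.normedAddCommGroup Matrix.normedSpace

/-- The unitary matrix `U = (1/√2)·[[1, 1], [i, −i]]`. -/
noncomputable def Umat : Matrix (Fin 2) (Fin 2) ℂ :=
  ((1 : ℂ) / (Real.sqrt 2 : ℂ)) • !![1, 1; Complex.I, -Complex.I]

/-- `A₁(z) = [[h(z), 0], [0, h(z) + 1 − i]]`. -/
noncomputable def Amat1 (h : ℂ × ℂ → ℂ) (z : ℂ × ℂ) : Matrix (Fin 2) (Fin 2) ℂ :=
  !![h z, 0; 0, h z + 1 - Complex.I]

/-- `A₂(z) = U* · [[H(z) + cos z₂, 0], [0, H(z) + i·sin z₂]] · U`. -/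
noncomputable def Amat2 (Hf : ℂ × ℂ → ℂ) (z : ℂ × ℂ) : Matrix (Fin 2) (Fin 2) ℂ :=
  star Umat * !![Hf z + Complex.cos z.2, 0; 0, Hf z + Complex.I * Complex.sin z.2] *
    Umat

/-!
Write `D = diag(0, 1 − i)` and `σ = [[0, 1], [1, 0]]`. Then `A₁ = h·1 + D` and, conjugating by `U`,
`A₂ = H·1 + (e^{i z₂}/2)·1 + (e^{−i z₂}/2)·σ`. Scalar matrices are central, so normality reduces
to that of the diagonal `D` and the self-adjoint `σ`, and every commutator reduces to
`[σ, D*] = (1 + i)·[[0, 1], [−1, 0]]`. Since `D* = i·D`, the matrix `A₁* − i·A₁` is scalar, which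
gives (ii). The non-scalar part of `A₂` depends only on `z₂` and that of `A₁` is constant, so
`∂₁A₂ = ∂₁H·1 = ∂₂h·1 = ∂₂A₁`.
-/

open Complex ComplexConjugate Matrix

lemma isStarNormal_smul_one_add {R A : Type*} [CommSemiring R] [StarRing R] [Semiring A]
    [StarRing A] [Algebra R A] [StarModule R A] (r : R) (a : A) [IsStarNormal a] :
    IsStarNormal (r • (1 : A) + a) :=
  ((Commute.one_left (star a)).smul_left r).isStarNormal_add

lemma commutator_smul_one_add_left {R A : Type*} [CommSemiring R] [Ring A] [Algebra R A]
    (r : R) (a b : A) : (r • 1 + a) * b - b * (r • 1 + a) = a * b - b * a := by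
  simp only [add_mul, mul_add, smul_one_mul, mul_smul_one]
  abel

lemma commutator_smul_one_add_right {R A : Type*} [CommSemiring R] [Ring A] [Algebra R A]
    (r : R) (a b : A) : a * (r • 1 + b) - (r • 1 + b) * a = a * b - b * a := by
  simp only [add_mul, mul_add, smul_one_mul, mul_smul_one]
  abel

lemma Matrix.isStarNormal_diagonal {n α : Type*} [Fintype n] [DecidableEq n] [CommSemiring α]
    [StarRing α] (d : n → α) : IsStarNormal (diagonal d) :=
  ⟨by
    rw [star_eq_conjTranspose, diagonal_conjTranspose, Commute, SemiconjBy,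
      diagonal_mul_diagonal, diagonal_mul_diagonal]
    simp_rw [mul_comm]⟩
lemma pderiv1_smul_add_comp_snd {E : Type*} [NormedAddCommGroup E] [NormedSpace ℂ E]
    {g : ℂ × ℂ → ℂ} {K : ℂ → E} {z : ℂ × ℂ} (hg : DifferentiableAt ℂ g z)
    (hK : DifferentiableAt ℂ K z.2) (M : E) :
    pderiv1 (fun w => g w • M + K w.2) z = pderiv1 g z • M := by
  have hf : HasFDerivAt (fun w => g w • M + K w.2) _ z :=
    (hg.hasFDerivAt.smul_const M).add (hK.hasFDerivAt.comp z hasFDerivAt_snd)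
  simp [pderiv1, hf.fderiv]

lemma pderiv2_smul_add_const {E : Type*} [NormedAddCommGroup E] [NormedSpace ℂ E]
    {g : ℂ × ℂ → ℂ} {z : ℂ × ℂ} (hg : DifferentiableAt ℂ g z) (M C : E) :
    pderiv2 (fun w => g w • M + C) z = pderiv2 g z • M := by
  simp [pderiv2, fderiv_add_const, fderiv_smul_const hg]

lemma Umat_conj_diagonal (a b : ℂ) :
    star Umat * !![a, 0; 0, b] * Umat = ((a + b) / 2) • 1 + ((a - b) / 2) • !![0, 1; 1, 0] := by
  have h2 : ((√2 : ℝ) : ℂ) ^ 2 = 2 := by norm_cast; simp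
  ext i j
  fin_cases i <;> fin_cases j <;>
    simp [Umat, mul_apply, Fin.sum_univ_two, star_apply] <;> field_simp <;>
    simp only [h2, I_sq] <;> ring

lemma commutator_swap_diagonal {α : Type*} [CommRing α] (c : α) :
    !![0, 1; 1, 0] * diagonal ![0, c] - diagonal ![0, c] * !![0, 1; 1, 0] =
      c • !![0, 1; -1, 0] := by
  ext i j
  fin_cases i <;> fin_cases j <;> simp [vecMul, dotProduct, diagonal_apply]

lemma star_diagonal_zero_one_sub_I :
    star (diagonal ![0, 1 - I]) = I • diagonal ![0, 1 - I] := by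
  rw [star_eq_conjTranspose, diagonal_conjTranspose, ← diagonal_smul]
  congr 1
  ext i
  fin_cases i <;> simp [mul_sub, I_mul_I, add_comm]

lemma exp_neg_mul_I_mul_one_add_I (t : ℂ) :
    cexp (-t * I) / 2 * (1 + I) = 1 / (√2 : ℝ) * cexp (-I * (t - Real.pi / 4)) := by
  have h0 : ((√2 : ℝ) : ℂ) ≠ 0 := by norm_cast; positivity
  rw [show -I * (t - Real.pi / 4) = -t * I + ((Real.pi / 4 : ℝ) : ℂ) * I by push_cast; ring,
    exp_add, exp_mul_I (x := ((Real.pi / 4 : ℝ) : ℂ)), ← ofReal_cos, ← ofReal_sin,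
    Real.cos_pi_div_four, Real.sin_pi_div_four]
  push_cast
  field_simp

/-- The part `U* diag(cos t, i sin t) U` of `A₂`. -/
noncomputable def Amat2Trig (t : ℂ) : Matrix (Fin 2) (Fin 2) ℂ :=
  (cexp (t * I) / 2) • 1 + (cexp (-t * I) / 2) • !![0, 1; 1, 0]

lemma Amat1_eq (h : ℂ × ℂ → ℂ) (z : ℂ × ℂ) :
    Amat1 h z = h z • 1 + diagonal ![0, 1 - I] := by
  ext i j
  fin_cases i <;> fin_cases j <;> simp [Amat1, one_apply, add_sub_assoc]

lemma star_Amat1 (h : ℂ × ℂ → ℂ) (z : ℂ × ℂ) :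
    star (Amat1 h z) = conj (h z) • 1 + I • diagonal ![0, 1 - I] := by
  rw [Amat1_eq, star_add, star_smul, star_one, star_diagonal_zero_one_sub_I]
  rfl

lemma Amat2_eq (Hf : ℂ × ℂ → ℂ) (z : ℂ × ℂ) : Amat2 Hf z = Hf z • 1 + Amat2Trig z.2 := by
  rw [Amat2, Umat_conj_diagonal, Amat2Trig, exp_mul_I, exp_mul_I, cos_neg, sin_neg]
  module

lemma isStarNormal_Amat2Trig (t : ℂ) : IsStarNormal (Amat2Trig t) := by
  have : IsStarNormal (!![0, 1; 1, 0] : Matrix (Fin 2) (Fin 2) ℂ) :=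
    IsSelfAdjoint.isStarNormal (by ext i j; fin_cases i <;> fin_cases j <;> simp [star_apply])
  exact isStarNormal_smul_one_add _ _

lemma differentiable_Amat2Trig : Differentiable ℂ Amat2Trig := by
  unfold Amat2Trig
  fun_prop

lemma Amat2_mul_star_Amat1_sub (h Hf : ℂ × ℂ → ℂ) (z : ℂ × ℂ) :
    Amat2 Hf z * star (Amat1 h z) - star (Amat1 h z) * Amat2 Hf z =
      (cexp (-z.2 * I) / 2 * (1 + I)) • !![0, 1; -1, 0] := by
  rw [Amat2_eq, star_Amat1, commutator_smul_one_add_left, Amat2Trig,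
    commutator_smul_one_add_left, commutator_smul_one_add_right, smul_mul_smul_comm,
    smul_mul_smul_comm, mul_comm I, ← smul_sub, commutator_swap_diagonal, smul_smul]
  congr 1
  linear_combination (-cexp (-z.2 * I) / 2) * I_sq

/-- the explicit nontrivial pluriharmonic SD example (Example 6.3). -/
theorem explicit_minkowski_sd_example
    (h Hf : ℂ × ℂ → ℂ)
    (hh : AnalyticOnNhd ℂ h Set.univ) (hH : AnalyticOnNhd ℂ Hf Set.univ)
    (hHd : ∀ z, pderiv1 Hf z = pderiv2 h z) :
    (∀ z, IsStarNormal (Amat1 h z)) ∧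
    (∀ z, IsStarNormal (Amat2 Hf z)) ∧
    (∀ z, (star (Amat1 h z) - Complex.I • Amat1 h z) * Amat2 Hf z -
      Amat2 Hf z * (star (Amat1 h z) - Complex.I • Amat1 h z) = 0) ∧
    (∀ z, pderiv1 (Amat2 Hf) z = pderiv2 (Amat1 h) z) ∧
    (∀ z : ℂ × ℂ,
      Amat2 Hf z * star (Amat1 h z) - star (Amat1 h z) * Amat2 Hf z =
        ((1 : ℂ) / (Real.sqrt 2 : ℂ)) •
          Complex.exp (-Complex.I * (z.2 - (Real.pi : ℂ) / 4)) • !![0, 1; -1, 0] ∧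
      Amat2 Hf z * star (Amat1 h z) - star (Amat1 h z) * Amat2 Hf z ≠ 0) := by
  have hcomm (z : ℂ × ℂ) : Amat2 Hf z * star (Amat1 h z) - star (Amat1 h z) * Amat2 Hf z =
      ((1 : ℂ) / (Real.sqrt 2 : ℂ)) •
        Complex.exp (-Complex.I * (z.2 - (Real.pi : ℂ) / 4)) • !![0, 1; -1, 0] := by
    rw [Amat2_mul_star_Amat1_sub, exp_neg_mul_I_mul_one_add_I, smul_smul]
  refine ⟨fun z => ?_, fun z => ?_, fun z => ?_, fun z => ?_, fun z => ⟨hcomm z, ?_⟩⟩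
  · rw [Amat1_eq]
    have := isStarNormal_diagonal ![0, 1 - I]
    exact isStarNormal_smul_one_add _ _
  · rw [Amat2_eq]
    have := isStarNormal_Amat2Trig z.2
    exact isStarNormal_smul_one_add _ _
  · have hscalar : star (Amat1 h z) - I • Amat1 h z = (conj (h z) - I * h z) • 1 := by
      rw [star_Amat1, Amat1_eq]
      module
    rw [hscalar, smul_one_mul, mul_smul_one, sub_self]
  · rw [funext (Amat2_eq Hf), funext (Amat1_eq h),
      pderiv1_smul_add_comp_snd (hH z trivial).differentiableAt
        (differentiable_Amat2Trig z.2),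
      pderiv2_smul_add_const (hh z trivial).differentiableAt, hHd]
  · rw [hcomm z]
    refine smul_ne_zero (by simp) (smul_ne_zero (exp_ne_zero _) fun h0 => ?_)
    simpa using congrFun (congrFun h0 0) 1
end

section
/- Let 𝒜 be a C*-algebra and let A₁, A₂ : ℂ² → 𝒜 be holomorphic with A₁(z), A₂(z) normal for every z. Suppose that either [A₁(z)* − i·A₁(z), A₂(z)] = i(∂₁A₂(z) − ∂₂A₁(z)) for all z (the self-dual case under the Minkowski metric), or [A₁(z)* + i·A₁(z), A₂(z)] = −i(∂₁A₂(z) − ∂₂A₁(z)) for all z (the anti-self-dual case). Then [(∂ⱼA₁(z))*, A₂(z)] = 0 for j = 1, 2 and all z ∈ ℂ². -/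
open Complex

theorem AnalyticOnNhd.differentiable_fderiv_apply {E F : Type*} [NormedAddCommGroup E]
    [NormedSpace ℂ E] [NormedAddCommGroup F] [NormedSpace ℂ F] [CompleteSpace F] {f : E → F}
    (hf : AnalyticOnNhd ℂ f Set.univ) (v : E) : Differentiable ℂ fun z => fderiv ℂ f z v :=
  fun z => (hf.fderiv z trivial).differentiableAt.clm_apply (differentiableAt_const v)

section StarCommutator

variable {E : Type*} [NormedAddCommGroup E] [NormedSpace ℂ E]
  {𝒜 : Type*} [NormedRing 𝒜] [StarRing 𝒜] [NormedAlgebra ℂ 𝒜] {f g : E → 𝒜}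

theorem differentiable_star_commutator_of_eq (c : ℂ) {h : E → 𝒜} (hf : Differentiable ℂ f)
    (hg : Differentiable ℂ g) (hh : Differentiable ℂ h)
    (heq : ∀ z, (star (f z) - c • f z) * g z - g z * (star (f z) - c • f z) = c • h z) :
    Differentiable ℂ fun z => star (f z) * g z - g z * star (f z) := by
  have hfg : (fun z => star (f z) * g z - g z * star (f z)) =
      fun z => c • (f z * g z - g z * f z) + c • h z := by
    funext z
    have hz := heq z
    simp only [sub_mul, mul_sub, smul_mul_assoc, mul_smul_comm] at hz
    linear_combination (norm := module) hz
  rw [hfg]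
  fun_prop

variable [StarModule ℂ 𝒜] [ContinuousStar 𝒜] {z : E}

theorem fderiv_real_star_commutator_apply (hf : DifferentiableAt ℂ f z)
    (hg : DifferentiableAt ℂ g z) (v : E) :
    fderiv ℝ (fun w => star (f w) * g w - g w * star (f w)) z v =
      (star (fderiv ℂ f z v) * g z - g z * star (fderiv ℂ f z v)) +
        (star (f z) * fderiv ℂ g z v - fderiv ℂ g z v * star (f z)) := by
  have hf' := (hf.hasFDerivAt.restrictScalars ℝ).star
  have hg' := hg.hasFDerivAt.restrictScalars ℝ
  rw [((hf'.fun_mul' hg').fun_sub (hg'.fun_mul' hf')).fderiv]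
  simp only [sub_apply, add_apply, smul_apply, ContinuousLinearMap.coe_restrictScalars',
    smul_eq_mul, ContinuousLinearMap.comp_apply, ContinuousLinearEquiv.coe_coe, starL'_apply,
    MulOpposite.op_star, MulOpposite.smul_eq_mul_unop, MulOpposite.unop_op,
    MulOpposite.unop_star]
  abel

theorem commute_star_fderiv_of_differentiableAt_star_commutator (hf : DifferentiableAt ℂ f z)
    (hg : DifferentiableAt ℂ g z)
    (hfg : DifferentiableAt ℂ (fun w => star (f w) * g w - g w * star (f w)) z) (v : E) :
    Commute (star (fderiv ℂ f z v)) (g z) := by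
  have hI : fderiv ℝ (fun w => star (f w) * g w - g w * star (f w)) z (I • v) =
      I • fderiv ℝ (fun w => star (f w) * g w - g w * star (f w)) z v := by
    rw [hfg.fderiv_restrictScalars ℝ]
    exact (fderiv ℂ _ z).map_smul I v
  rw [fderiv_real_star_commutator_apply hf hg, fderiv_real_star_commutator_apply hf hg,
    map_smul, map_smul, star_smul, star_def, conj_I] at hI
  simp only [neg_smul, neg_mul, mul_neg, smul_mul_assoc, mul_smul_comm, smul_sub, smul_add] at hI
  have h2I : (2 * I) • (star (fderiv ℂ f z v) * g z) =
      (2 * I) • (g z * star (fderiv ℂ f z v)) := by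
    linear_combination (norm := module) -hI
  exact smul_right_injective 𝒜 (by simp [Complex.ext_iff]) h2I

end StarCommutator

theorem adjoint_derivatives_commute_general
    {𝒜 : Type*} [NormedRing 𝒜] [StarRing 𝒜] [CStarRing 𝒜]
    [NormedAlgebra ℂ 𝒜] [CompleteSpace 𝒜] [StarModule ℂ 𝒜]
    (A₁ A₂ : ℂ × ℂ → 𝒜)
    (h₁ : AnalyticOnNhd ℂ A₁ Set.univ) (h₂ : AnalyticOnNhd ℂ A₂ Set.univ)
    (hsd : (∀ z, (star (A₁ z) - Complex.I • A₁ z) * A₂ z -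
          A₂ z * (star (A₁ z) - Complex.I • A₁ z) =
        Complex.I • (pderiv1 A₂ z - pderiv2 A₁ z)) ∨
      (∀ z, (star (A₁ z) + Complex.I • A₁ z) * A₂ z -
          A₂ z * (star (A₁ z) + Complex.I • A₁ z) =
        -(Complex.I • (pderiv1 A₂ z - pderiv2 A₁ z)))) :
    ∀ z : ℂ × ℂ,
      star (pderiv1 A₁ z) * A₂ z = A₂ z * star (pderiv1 A₁ z) ∧
      star (pderiv2 A₁ z) * A₂ z = A₂ z * star (pderiv2 A₁ z) := by
  have hA₁ : Differentiable ℂ A₁ := fun z => (h₁ z trivial).differentiableAt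
  have hA₂ : Differentiable ℂ A₂ := fun z => (h₂ z trivial).differentiableAt
  have hF : Differentiable ℂ fun z => pderiv1 A₂ z - pderiv2 A₁ z :=
    (h₂.differentiable_fderiv_apply _).sub (h₁.differentiable_fderiv_apply _)
  have hcomm : Differentiable ℂ fun z => star (A₁ z) * A₂ z - A₂ z * star (A₁ z) := by
    rcases hsd with hsd | hasd
    · exact differentiable_star_commutator_of_eq I hA₁ hA₂ hF hsd
    · exact differentiable_star_commutator_of_eq (-I) hA₁ hA₂ hF fun z => by
        simpa only [neg_smul, sub_neg_eq_add] using hasd z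
  intro z
  exact ⟨commute_star_fderiv_of_differentiableAt_star_commutator (hA₁ z) (hA₂ z) (hcomm z) _,
    commute_star_fderiv_of_differentiableAt_star_commutator (hA₁ z) (hA₂ z) (hcomm z) _⟩

/-- if `A₁, A₂ : ℂ² → 𝒜` are holomorphic with normal values and the
curvature form `F_A` is SD or ASD under the Minkowski metric, then
`[(∂ⱼA₁(z))*, A₂(z)] = 0` for `j = 1, 2` and all `z`. -/
theorem adjoint_derivatives_commute
    {𝒜 : Type*} [NormedRing 𝒜] [StarRing 𝒜] [CStarRing 𝒜]
    [NormedAlgebra ℂ 𝒜] [CompleteSpace 𝒜] [StarModule ℂ 𝒜]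
    (A₁ A₂ : ℂ × ℂ → 𝒜)
    (h₁ : AnalyticOnNhd ℂ A₁ Set.univ) (h₂ : AnalyticOnNhd ℂ A₂ Set.univ)
    (hn₁ : ∀ z, IsStarNormal (A₁ z)) (hn₂ : ∀ z, IsStarNormal (A₂ z))
    (hsd : (∀ z, (star (A₁ z) - Complex.I • A₁ z) * A₂ z -
          A₂ z * (star (A₁ z) - Complex.I • A₁ z) =
        Complex.I • (pderiv1 A₂ z - pderiv2 A₁ z)) ∨
      (∀ z, (star (A₁ z) + Complex.I • A₁ z) * A₂ z -
          A₂ z * (star (A₁ z) + Complex.I • A₁ z) =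
        -(Complex.I • (pderiv1 A₂ z - pderiv2 A₁ z)))) :
    ∀ z : ℂ × ℂ,
      star (pderiv1 A₁ z) * A₂ z = A₂ z * star (pderiv1 A₁ z) ∧
      star (pderiv2 A₁ z) * A₂ z = A₂ z * star (pderiv2 A₁ z) :=
  adjoint_derivatives_commute_general A₁ A₂ h₁ h₂ hsd
end
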